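/- Let C(z) satisfy C(z) = 1 + 2z C(z) + z² C(z)². For positive integers n, f and non-negative integer t, the coefficient of z^n in (zC(z))^{f+t+2}/(1+zC(z))² equals C(2n-3, n-f-t-2) − C(2n-3, n-f-t-3). -/

import Mathlib

/-!
`D = 1 + zC` satisfies the Catalan equation `D = 1 + zD²`, and `zC = D - 1 = zD²`, so the series
equals `z^m D^(2m-2)` with `m = f + t + 2`. Expanding `D^(k+1) = D^k + zD^(k+2)` gives a Pascal-type
recursion for the coefficients of the powers of `D`, which is solved by the ballot numbers
`[z^j] D^k = C(2j+k-1, j) - C(2j+k-1, j-1)`; at `j = n - m`, `k = 2m - 2` this is the claim.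
-/

/-- Binomial coefficient `C(a,b)` for integers `a`, `b`, with the convention that it
vanishes when `b < 0` or `b > a`. -/
def zchoose (a b : ℤ) : ℤ :=
  if 0 ≤ b ∧ b ≤ a then (a.toNat).choose b.toNat else 0

@[norm_cast]
theorem zchoose_natCast (a b : ℕ) : zchoose a b = a.choose b := by
  unfold zchoose
  split_ifs with h
  · simp
  · rw [Nat.choose_eq_zero_of_lt (by omega), Nat.cast_zero]

theorem zchoose_of_neg (a : ℤ) {b : ℤ} (hb : b < 0) : zchoose a b = 0 :=
  if_neg fun h => (h.1.trans_lt hb).false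

theorem zchoose_zero_right {a : ℤ} (ha : 0 ≤ a) : zchoose a 0 = 1 := by
  simp [zchoose, ha]

theorem zchoose_succ_succ {a : ℤ} (ha : 0 ≤ a) (b : ℤ) :
    zchoose (a + 1) (b + 1) = zchoose a b + zchoose a (b + 1) := by
  rcases lt_trichotomy b (-1) with hb | rfl | hb
  · rw [zchoose_of_neg _ (show b + 1 < 0 by omega), zchoose_of_neg _ (show b < 0 by omega),
      zchoose_of_neg _ (show b + 1 < 0 by omega), add_zero]
  · rw [neg_add_cancel, zchoose_of_neg a (show (-1 : ℤ) < 0 by omega), zchoose_zero_right ha,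
      zchoose_zero_right (by omega), zero_add]
  · lift a to ℕ using ha
    lift b to ℕ using (by omega)
    exact_mod_cast Nat.choose_succ_succ' a b

namespace PowerSeries

variable {R : Type*} [CommRing R] {D : R⟦X⟧}

theorem coeff_succ_pow_succ_of_eq_one_add_X_mul_sq (hD : D = 1 + X * D ^ 2) (j k : ℕ) :
    coeff (j + 1) (D ^ (k + 1)) = coeff (j + 1) (D ^ k) + coeff j (D ^ (k + 2)) := by
  have hpow : D ^ (k + 1) = D ^ k + X * D ^ (k + 2) := by
    rw [pow_succ]
    nth_rw 2 [hD]
    ring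
  rw [hpow, map_add, coeff_succ_X_mul]

theorem coeff_pow_of_eq_one_add_X_mul_sq (hD : D = 1 + X * D ^ 2) (j k : ℕ) (hjk : 0 < j + k) :
    coeff j (D ^ k) =
      ((zchoose (2 * j + k - 1) j - zchoose (2 * j + k - 1) (j - 1) : ℤ) : R) := by
  induction j generalizing k with
  | zero =>
    have hconst : constantCoeff D = 1 := by rw [hD]; simp
    rw [coeff_zero_eq_constantCoeff_apply, map_pow, hconst, one_pow, Nat.cast_zero,
      zchoose_zero_right (by omega), zchoose_of_neg _ (by omega), sub_zero, Int.cast_one]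
  | succ j ih =>
    induction k with
    | zero =>
      have hsymm : zchoose (2 * j + 1) (j + 1) = zchoose (2 * j + 1) j := by
        exact_mod_cast Nat.choose_symm_half j
      rw [pow_zero, coeff_one, if_neg j.succ_ne_zero]
      push_cast at hsymm ⊢
      rw [show 2 * ((j : ℤ) + 1) + 0 - 1 = 2 * j + 1 by ring, add_sub_cancel_right, hsymm,
        sub_self]
    | succ k ihk =>
      rw [coeff_succ_pow_succ_of_eq_one_add_X_mul_sq hD, ihk (by omega), ih (k + 2) (by omega),
        ← Int.cast_add]
      congr 1
      have hpascal := zchoose_succ_succ (show (0 : ℤ) ≤ 2 * j + k + 1 by omega)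
      have hpascal_j := hpascal j
      have hpascal_pred := hpascal (j - 1)
      push_cast
      ring_nf at hpascal_j hpascal_pred ⊢
      linear_combination hpascal_pred - hpascal_j

theorem X_mul_pow_mul_inv_eq_X_pow_mul_pow {K : Type*} [Field K] {C : K⟦X⟧}
    (hC : C = 1 + 2 * X * C + X ^ 2 * C ^ 2) (m : ℕ) :
    (X * C) ^ (m + 2) * ((1 + X * C) ^ 2)⁻¹ = X ^ (m + 2) * (1 + X * C) ^ (2 * m + 2) := by
  have hXC : X * C = X * (1 + X * C) ^ 2 := by linear_combination X * hC
  have hconst : constantCoeff ((1 + X * C) ^ 2) ≠ 0 := by simp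
  rw [eq_comm, eq_mul_inv_iff_mul_eq hconst]
  generalize 1 + X * C = D at hXC ⊢
  rw [hXC]
  ring

end PowerSeries

open PowerSeries in
theorem coeff_motzkin_term3_general (C : PowerSeries ℚ)
    (hC : C = 1 + 2 * X * C + X ^ 2 * C ^ 2) (n f t : ℕ) :
    PowerSeries.coeff n ((X * C) ^ (f + t + 2) * ((1 + X * C) ^ 2)⁻¹) =
      ((zchoose (2 * (n : ℤ) - 3) ((n : ℤ) - f - t - 2)
        - zchoose (2 * (n : ℤ) - 3) ((n : ℤ) - f - t - 3) : ℤ) : ℚ) := by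
  have hD : 1 + X * C = 1 + X * (1 + X * C) ^ 2 := by linear_combination X * hC
  rw [X_mul_pow_mul_inv_eq_X_pow_mul_pow hC, coeff_X_pow_mul']
  split_ifs with hn
  · obtain ⟨j, rfl⟩ := Nat.exists_eq_add_of_le' hn
    rw [Nat.add_sub_cancel, coeff_pow_of_eq_one_add_X_mul_sq hD _ _ (by omega)]
    push_cast
    congr 3 <;> ring
  · rw [zchoose_of_neg _ (by omega), zchoose_of_neg _ (by omega), sub_zero, Int.cast_zero]

open PowerSeries in
/-- If `C(z)` satisfies `C = 1 + 2zC + z²C²`, then for positive integers `n`, `f` and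
non-negative `t`, the coefficient of `z^n` in `(zC)^{f+t+2}/(1+zC)²` equals
`C(2n-3,n-f-t-2) − C(2n-3,n-f-t-3)`. -/
theorem coeff_motzkin_term3 (C : PowerSeries ℚ)
    (hC : C = 1 + 2 * X * C + X ^ 2 * C ^ 2) (n f t : ℕ) (hn : 1 ≤ n) (hf : 1 ≤ f) :
    PowerSeries.coeff n ((X * C) ^ (f + t + 2) * ((1 + X * C) ^ 2)⁻¹) =
      ((zchoose (2 * (n : ℤ) - 3) ((n : ℤ) - f - t - 2)
        - zchoose (2 * (n : ℤ) - 3) ((n : ℤ) - f - t - 3) : ℤ) : ℚ) :=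
  coeff_motzkin_term3_general C hC n f t
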